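/- For every n ≥ 1, the minimal polynomial of 2cos(2π/2^{n+2}) = 2cos(π/2^{n+1}) over ℚ is the Lucas polynomial L_{2^n}(x); equivalently, ψ_{2^{n+2}}(x) = L_{2^n}(x) as polynomials in ℝ[x]. -/

import Mathlib

open Polynomial

/-- The Lucas polynomials: `L 0 = 2`, `L 1 = X`, `L (n+2) = X * L (n+1) - L n`. -/
noncomputable def lucasPoly : ℕ → Polynomial ℤ
  | 0 => 2
  | 1 => X
  | n + 2 => X * lucasPoly (n + 1) - lucasPoly n

/-- The zpread polynomials `Z n = 2 - L n (2 - X)`. -/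
noncomputable def zpread (n : ℕ) : Polynomial ℤ := 2 - (lucasPoly n).comp (2 - X)
/-- `psi n` : for `n > 2`, the polynomial `∏_{0 < j < n/2, gcd(j,n)=1} (X - 2 cos(2πj/n))` in `ℝ[X]`,
with `psi 1 = X - 2` and `psi 2 = X + 2`. -/
noncomputable def psiPoly : ℕ → Polynomial ℝ
  | 1 => X - 2
  | 2 => X + 2
  | n => ∏ j ∈ Finset.filter (fun j => 0 < j ∧ 2 * j < n ∧ Nat.gcd j n = 1) (Finset.range n),
      (X - C (2 * Real.cos (2 * Real.pi * (j : ℝ) / (n : ℝ))))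


lemma lucas_rec (n : ℕ) : lucasPoly (n + 2) = X * lucasPoly (n + 1) - lucasPoly n := rfl

lemma lucas_add : ∀ d n : ℕ, lucasPoly (n + 2 * d) + lucasPoly n = lucasPoly (n + d) * lucasPoly d := by
  intro d
  induction d using Nat.twoStepInduction with
  | zero => intro n; simp [lucasPoly]; ring
  | one =>
    intro n
    have h := lucas_rec n
    rw [show n + 2 * 1 = n + 2 by ring, h]
    have h1 : lucasPoly 1 = X := rfl
    rw [h1]
    ring
  | more d ih ih1 =>
      intro n
      have h1 := ih1 (n + 1)
      have h2 := ih (n + 2)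
      have e1 : n + 1 + 2 * (d + 1) = n + 2 * d + 3 := by ring
      have e2 : n + 2 + 2 * d = n + 2 * d + 2 := by ring
      have e3 : n + 1 + (d + 1) = n + d + 2 := by ring
      have e4 : n + 2 + d = n + d + 2 := by ring
      rw [e1, e3] at h1
      rw [e2, e4] at h2
      have hr1 := lucas_rec d
      have hr2 := lucas_rec n
      have hr3 := lucas_rec (n + 2 * d + 2)
      have : n + 2 * (d + 2) = n + 2 * d + 2 + 2 := by ring
      rw [this, hr3, hr1, show n + (d + 2) = n + d + 2 from by ring]
      -- goal: X * L(n+2d+3) - L(n+2d+2) + L n = L(n+d+2) * (X * L(d+1) - L d)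
      have : lucasPoly (n+d+2) * (X * lucasPoly (d+1) - lucasPoly d)
          = X * (lucasPoly (n+d+2) * lucasPoly (d+1)) - lucasPoly (n+d+2) * lucasPoly d := by ring
      rw [this, ← h1, ← h2, hr2]
      ring

lemma lucas_double (d : ℕ) : lucasPoly (2 * d) = lucasPoly d ^ 2 - 2 := by
  have := lucas_add d 0
  simp only [Nat.zero_add] at this
  have h0 : lucasPoly 0 = 2 := rfl
  rw [h0] at this
  linear_combination this

lemma lucas_pow_succ (k : ℕ) : lucasPoly (2 ^ (k + 1)) = lucasPoly (2 ^ k) ^ 2 - 2 := by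
  rw [pow_succ, mul_comm, lucas_double]

lemma lucas_pow_monic (k : ℕ) : (lucasPoly (2 ^ k)).Monic ∧ (lucasPoly (2 ^ k)).natDegree = 2 ^ k := by
  induction k with
  | zero =>
    constructor
    · show (X : Polynomial ℤ).Monic
      exact monic_X
    · show (X : Polynomial ℤ).natDegree = 1
      exact natDegree_X
  | succ k ih =>
    obtain ⟨hm, hd⟩ := ih
    rw [lucas_pow_succ]
    have h2 : (2 : Polynomial ℤ) = C 2 := by norm_num
    have hmsq : (lucasPoly (2 ^ k) ^ 2).Monic := hm.pow 2
    have hdsq : (lucasPoly (2 ^ k) ^ 2).natDegree = 2 ^ (k + 1) := by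
      rw [hm.natDegree_pow, hd]; ring
    constructor
    · rw [h2]
      have : (lucasPoly (2 ^ k) ^ 2 - C 2).natDegree = 2 ^ (k+1) := by rw [natDegree_sub_C, hdsq]
      unfold Polynomial.Monic
      rw [leadingCoeff, this, ← hdsq, coeff_sub, coeff_C,
        if_neg (by rw [hdsq]; positivity), sub_zero]
      exact hmsq
    · rw [h2, natDegree_sub_C, hdsq]

lemma lucas_pow_map_two (k : ℕ) :
    (lucasPoly (2 ^ k)).map (Int.castRingHom (ZMod 2)) = X ^ (2 ^ k) := by
  induction k with
  | zero =>
    show (X : Polynomial ℤ).map _ = _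
    simp
  | succ k ih =>
    rw [lucas_pow_succ, Polynomial.map_sub, Polynomial.map_pow, ih]
    have : ((2 : Polynomial ℤ).map (Int.castRingHom (ZMod 2))) = 0 := by
      rw [show (2 : Polynomial ℤ) = C 2 from by norm_num, map_C]
      have : (Int.castRingHom (ZMod 2)) 2 = 0 := by decide
      rw [this, map_zero]
    rw [this, sub_zero, ← pow_mul, pow_succ]

lemma lucas_pow_coeff_zero (k : ℕ) (hk : 1 ≤ k) :
    (lucasPoly (2 ^ k)).coeff 0 = 2 ∨ (lucasPoly (2 ^ k)).coeff 0 = -2 := by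
  induction k with
  | zero => omega
  | succ k ih =>
    rcases Nat.eq_or_lt_of_le hk with h | h
    · right
      have : lucasPoly (2 ^ 1) = X ^ 2 - 2 := by
        have := lucas_pow_succ 0
        simpa [lucasPoly] using this
      rw [show k = 0 by omega, this]
      simp [coeff_sub]
    · have h0 := ih (by omega)
      left
      rw [lucas_pow_succ, coeff_zero_eq_eval_zero, eval_sub, eval_pow,
        ← coeff_zero_eq_eval_zero]
      rcases h0 with h0 | h0 <;> rw [h0] <;> norm_num

lemma lucas_pow_even_coeff (k : ℕ) {i : ℕ} (hi : i < 2 ^ k) :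
    (2:ℤ) ∣ (lucasPoly (2 ^ k)).coeff i := by
  have h := congrArg (fun p => Polynomial.coeff p i) (lucas_pow_map_two k)
  simp only [coeff_map, coeff_X_pow, if_neg (Nat.ne_of_lt hi)] at h
  have : (((lucasPoly (2 ^ k)).coeff i : ℤ) : ZMod 2) = 0 := h
  exact (ZMod.intCast_zmod_eq_zero_iff_dvd _ 2).1 this

lemma lucas_pow_irreducible (k : ℕ) (hk : 1 ≤ k) : Irreducible (lucasPoly (2 ^ k)) := by
  obtain ⟨hm, hd⟩ := lucas_pow_monic k
  have heis : (lucasPoly (2 ^ k)).IsEisensteinAt (Ideal.span {(2:ℤ)}) := by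
    constructor
    · rw [hm.leadingCoeff]
      intro h; rw [Ideal.mem_span_singleton] at h; norm_num at h
    · intro i hi
      rw [Ideal.mem_span_singleton]
      exact lucas_pow_even_coeff k (hd ▸ hi)
    · rw [Ideal.span_singleton_pow, Ideal.mem_span_singleton]
      rcases lucas_pow_coeff_zero k hk with h | h <;> rw [h] <;> norm_num
  exact heis.irreducible ((Ideal.span_singleton_prime (by norm_num)).2 Int.prime_two)
    hm.isPrimitive (by rw [hd]; positivity)

lemma lucas_pow_irr_rat (k : ℕ) (hk : 1 ≤ k) :
    Irreducible ((lucasPoly (2 ^ k)).map (algebraMap ℤ ℚ)) :=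
  ((lucas_pow_monic k).1.irreducible_iff_irreducible_map_fraction_map).1
    (lucas_pow_irreducible k hk)

lemma lucas_pow_aeval_cos (k : ℕ) (θ : ℝ) :
    Polynomial.aeval (2 * Real.cos θ) (lucasPoly (2 ^ k)) = 2 * Real.cos (2 ^ k * θ) := by
  induction k with
  | zero =>
    show Polynomial.aeval _ (X : Polynomial ℤ) = _
    simp
  | succ k ih =>
    rw [lucas_pow_succ, map_sub, map_pow, ih]
    have h2 : (2:ℝ) ^ (k+1) * θ = 2 * (2 ^ k * θ) := by ring
    rw [h2, Real.cos_two_mul]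
    have : (Polynomial.aeval (2 * Real.cos θ)) (2 : Polynomial ℤ) = 2 := map_ofNat _ 2
    rw [this]
    ring

lemma minpoly_part (n : ℕ) (hn : 1 ≤ n) :
    minpoly ℚ (2 * Real.cos (Real.pi / (2:ℝ) ^ (n + 1)))
      = (lucasPoly (2 ^ n)).map (algebraMap ℤ ℚ) := by
  have hroot : Polynomial.aeval (2 * Real.cos (Real.pi / (2:ℝ) ^ (n + 1)))
      ((lucasPoly (2 ^ n)).map (algebraMap ℤ ℚ)) = 0 := by
    rw [aeval_map_algebraMap, lucas_pow_aeval_cos]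
    have h2 : (2:ℝ) ^ n * (Real.pi / 2 ^ (n+1)) = Real.pi / 2 := by
      rw [pow_succ]
      have : (2:ℝ) ^ n ≠ 0 := by positivity
      field_simp
    rw [h2, Real.cos_pi_div_two, mul_zero]
  exact (minpoly.eq_of_irreducible_of_monic (lucas_pow_irr_rat n hn) hroot
    ((lucas_pow_monic n).1.map _)).symm

lemma psi_part (n : ℕ) (hn : 1 ≤ n) :
    psiPoly (2 ^ (n + 2)) = (lucasPoly (2 ^ n)).map (Int.castRingHom ℝ) := by
  have hN8 : 8 ≤ 2 ^ (n + 2) := by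
    calc (8:ℕ) = 2 ^ 3 := rfl
    _ ≤ 2 ^ (n+2) := Nat.pow_le_pow_right (by norm_num) (by omega)
  have hNval : (2:ℕ) ^ (n + 2) = 4 * 2 ^ n := by ring
  have hpsi : psiPoly (2 ^ (n + 2)) = ∏ j ∈ Finset.filter
      (fun j => 0 < j ∧ 2 * j < 2 ^ (n+2) ∧ Nat.gcd j (2 ^ (n+2)) = 1)
      (Finset.range (2 ^ (n+2))),
      (X - C (2 * Real.cos (2 * Real.pi * (j : ℝ) / ((2 ^ (n+2) : ℕ) : ℝ)))) := by
    rw [psiPoly.eq_def]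
    split
    · omega
    · omega
    · rfl
  -- describe the index set
  have hset : Finset.filter
      (fun j => 0 < j ∧ 2 * j < 2 ^ (n+2) ∧ Nat.gcd j (2 ^ (n+2)) = 1)
      (Finset.range (2 ^ (n+2)))
      = Finset.image (fun i => 2 * i + 1) (Finset.range (2 ^ n)) := by
    ext j
    simp only [Finset.mem_filter, Finset.mem_range, Finset.mem_image]
    constructor
    · rintro ⟨hjN, hj0, hjh, hg⟩
      have hodd : Odd j := by
        have : Nat.Coprime j (2 ^ (n+2)) := hg
        rw [Nat.coprime_pow_right_iff (by omega)] at this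
        exact Nat.coprime_two_right.1 this
      obtain ⟨i, rfl⟩ := hodd
      exact ⟨i, by omega, rfl⟩
    · rintro ⟨i, hi, rfl⟩
      beta_reduce
      refine ⟨by omega, by omega, by omega, ?_⟩
      have : Nat.Coprime (2 * i + 1) (2 ^ (n+2)) := by
        rw [Nat.coprime_pow_right_iff (by omega)]
        exact Nat.coprime_two_right.2 ⟨i, by ring⟩
      exact this
  set c : ℕ → ℝ := fun i => 2 * Real.cos ((2 * (i:ℝ) + 1) * Real.pi / 2 ^ (n+1)) with hcdef
  have hCeq : ∀ i : ℕ, 2 * Real.cos (2 * Real.pi * (((2 * i + 1 : ℕ)):ℝ) / ((2 ^ (n+2) : ℕ) : ℝ))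
      = c i := by
    intro i
    congr 2
    push_cast
    rw [div_eq_div_iff (by positivity) (by positivity)]
    ring
  have hinj2 : Function.Injective (fun i : ℕ => 2 * i + 1) := fun a b h => by beta_reduce at h; omega
  have hprod : psiPoly (2 ^ (n + 2)) = ∏ i ∈ Finset.range (2 ^ n), (X - C (c i)) := by
    rw [hpsi, hset, Finset.prod_image (fun a _ b _ h => hinj2 h)]
    refine Finset.prod_congr rfl fun i _ => ?_
    rw [hCeq]
  -- now show the product equals P
  set P := (lucasPoly (2 ^ n)).map (Int.castRingHom ℝ) with hPdef
  obtain ⟨hm, hd⟩ := lucas_pow_monic n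
  have hPm : P.Monic := hm.map _
  have hPd : P.natDegree = 2 ^ n := by
    rw [hPdef, hm.natDegree_map, hd]
  have hroot : ∀ i : ℕ, P.IsRoot (c i) := by
    intro i
    have hev : P.eval (c i) = Polynomial.aeval (c i) (lucasPoly (2 ^ n)) := by
      rw [hPdef, eval_map, aeval_def, algebraMap_int_eq]
    have := lucas_pow_aeval_cos n ((2 * (i:ℝ) + 1) * Real.pi / 2 ^ (n+1))
    rw [Polynomial.IsRoot, hev]
    show Polynomial.aeval (2 * Real.cos ((2 * (i:ℝ) + 1) * Real.pi / 2 ^ (n+1))) (lucasPoly (2 ^ n)) = 0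
    rw [this]
    have harg : (2:ℝ) ^ n * ((2 * (i:ℝ) + 1) * Real.pi / 2 ^ (n+1))
        = (2 * (i:ℤ) + 1) * Real.pi / 2 := by
      push_cast
      have h2 : ((2:ℝ)) ^ (n+1) = 2 * 2 ^ n := by ring
      rw [h2]
      have : (2:ℝ) ^ n ≠ 0 := by positivity
      field_simp
    rw [harg, Real.cos_eq_zero_iff.2 ⟨i, rfl⟩, mul_zero]
  have hinj : ∀ i ∈ Finset.range (2 ^ n), ∀ j ∈ Finset.range (2 ^ n), c i = c j → i = j := by
    intro i hi j hj hij
    rw [Finset.mem_range] at hi hj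
    have hpi := Real.pi_pos
    have hmem : ∀ k : ℕ, k < 2 ^ n → (2 * (k:ℝ) + 1) * Real.pi / 2 ^ (n+1) ∈ Set.Icc 0 Real.pi := by
      intro k hk
      constructor
      · positivity
      · rw [div_le_iff₀ (by positivity)]
        have : (2 * (k:ℝ) + 1) ≤ 2 ^ (n+1) := by
          push_cast
          have : (k:ℝ) + 1 ≤ (2:ℝ) ^ n := by exact_mod_cast Nat.succ_le_of_lt hk
          have h2 : ((2:ℝ)) ^ (n+1) = 2 * 2 ^ n := by ring
          nlinarith
        nlinarith
    have hcos : Real.cos ((2 * (i:ℝ) + 1) * Real.pi / 2 ^ (n+1))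
        = Real.cos ((2 * (j:ℝ) + 1) * Real.pi / 2 ^ (n+1)) := by
      have h := hij
      simp only [hcdef] at h
      linarith
    have := Real.injOn_cos (hmem i hi) (hmem j hj) hcos
    have h2 : (0:ℝ) < 2 ^ (n+1) := by positivity
    field_simp at this
    exact_mod_cast (by linarith : (i:ℝ) = j)
  have hPne : P ≠ 0 := hPm.ne_zero
  set m : Multiset ℝ := (Finset.range (2 ^ n)).val.map c with hmdef
  have hnodup : m.Nodup := Multiset.Nodup.map_on hinj (Finset.range (2 ^ n)).nodup
  have hsub : m ⊆ P.roots := by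
    intro x hx
    obtain ⟨i, hi, rfl⟩ := Multiset.mem_map.1 hx
    rw [Polynomial.mem_roots hPne]
    exact hroot i
  have hle : m ≤ P.roots := (Multiset.le_iff_subset hnodup).2 hsub
  have hcard : Multiset.card m = 2 ^ n := by simp [hmdef]
  have heq : m = P.roots := Multiset.eq_of_le_of_card_le hle (by
    rw [hcard]
    rw [← hPd]
    exact Polynomial.card_roots' P)
  have hsplits : P.Splits := by
    rw [Polynomial.splits_iff_card_roots, ← heq, hcard, hPd]
  have := hsplits.eq_prod_roots_of_monic hPm
  rw [hprod, this, ← heq, hmdef, Multiset.map_map, Finset.prod_eq_multiset_prod]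
  rfl

/-- For `n ≥ 1`, the minimal polynomial of `2cos(π/2^{n+1})` over `ℚ` is `L (2^n)`;
equivalently `ψ (2^{n+2}) = L (2^n)` in `ℝ[X]`. -/
theorem minpoly_cos_pow_two (n : ℕ) (hn : 1 ≤ n) :
    (minpoly ℚ (2 * Real.cos (Real.pi / (2 : ℝ) ^ (n + 1)))).map (algebraMap ℚ ℝ) =
      (lucasPoly (2 ^ n)).map (Int.castRingHom ℝ) ∧
    psiPoly (2 ^ (n + 2)) = (lucasPoly (2 ^ n)).map (Int.castRingHom ℝ) := by
  constructor
  · rw [minpoly_part n hn, Polynomial.map_map,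
      show (algebraMap ℚ ℝ).comp (algebraMap ℤ ℚ) = Int.castRingHom ℝ from Subsingleton.elim _ _]
  · exact psi_part n hn
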